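/- arXiv:0904.4246 — 3 statements merged into one kernel-verified Lean document; each statement's English description precedes it below -/
import Mathlib

section
/- Fix real numbers k₁, l₁, C₁, k₂, l₂, C₂ with k₁ + k₂ = 3, l₁ + l₂ = 1, k₁ l₂ − k₂ l₁ ≠ 0, and C₁ C₂ = ε/(k₁ l₂ − k₂ l₁) for some ε ∈ {1, −1}. Define on U' = {(ρ,θ,ψ) : ρ > 0, 0 < θ < π/4, 0 < ψ < π/2} the functions r = ρ² sin θ cos θ sin ψ and z^α = C_α ρ^{k_α} (cos θ)^{l_α} (cos 2θ)^{(k_α−l_α)/2} (cos ψ)^{l_α} for α = 1, 2. Then for all (ρ,θ,ψ) ∈ U', ⟨∇z¹,∇z¹⟩·⟨∇z²,∇z²⟩ − ⟨∇z¹,∇z²⟩² = ⟨∇r,∇r⟩, where ⟨∇u, ∇v⟩ = (∂_ρ u)(∂_ρ v) + ρ⁻²(∂_θ u)(∂_θ v) + ρ⁻² cos⁻²θ (∂_ψ u)(∂_ψ v). -/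
/-!
The logarithmic gradient of an ansatz coordinate is affine in its exponents,
`dz / z = k A + l B` for two fixed covector fields `A`, `B`, so
`dz¹ ∧ dz² = (k₁l₂ − k₂l₁) z¹z² A ∧ B`. When `k₁ + k₂ = 3` and `l₁ + l₂ = 1` the product
`z¹z²` is `C₁C₂ ρ³ cos θ cos 2θ cos ψ`, and the normalisation of `C₁C₂` turns this into
`dz¹ ∧ dz² = ±⋆dr`. The Hodge star is an isometry, so the Gram determinant
`|dz¹ ∧ dz²|²` equals `|dr|²`.
-/

open Real

/-- Partial derivative in the first variable. -/
noncomputable def pd1 (f : ℝ → ℝ → ℝ → ℝ) (ρ θ ψ : ℝ) : ℝ := deriv (fun x => f x θ ψ) ρ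

/-- Partial derivative in the second variable. -/
noncomputable def pd2 (f : ℝ → ℝ → ℝ → ℝ) (ρ θ ψ : ℝ) : ℝ := deriv (fun x => f ρ x ψ) θ

/-- Partial derivative in the third variable. -/
noncomputable def pd3 (f : ℝ → ℝ → ℝ → ℝ) (ρ θ ψ : ℝ) : ℝ := deriv (fun x => f ρ θ x) ψ

/-- Inner product of gradients with respect to the orbit-space metric
`g̃ = dρ² + ρ² dθ² + ρ² cos²θ dψ²`. -/
noncomputable def pairing (u v : ℝ → ℝ → ℝ → ℝ) (ρ θ ψ : ℝ) : ℝ :=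
  pd1 u ρ θ ψ * pd1 v ρ θ ψ
    + (ρ ^ 2)⁻¹ * (pd2 u ρ θ ψ * pd2 v ρ θ ψ)
    + (ρ ^ 2)⁻¹ * ((cos θ) ^ 2)⁻¹ * (pd3 u ρ θ ψ * pd3 v ρ θ ψ)

noncomputable def ansatz (C k l : ℝ) : ℝ → ℝ → ℝ → ℝ :=
  fun ρ θ ψ => C * ρ ^ k * (cos θ) ^ l * (cos (2 * θ)) ^ ((k - l) / 2) * (cos ψ) ^ l

noncomputable def radial : ℝ → ℝ → ℝ → ℝ :=
  fun ρ θ ψ => ρ ^ 2 * sin θ * cos θ * sin ψ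

/-- The hypotheses say `du ∧ dv = ε ⋆dw` for the volume form `ρ² cos θ dρ dθ dψ` of `g̃`. -/
theorem pairing_gram_eq_pairing_of_wedge {u v w : ℝ → ℝ → ℝ → ℝ} {ρ θ ψ ε : ℝ}
    (hρ : ρ ≠ 0) (hc : cos θ ≠ 0) (hε : ε ^ 2 = 1)
    (h₁₂ : pd1 u ρ θ ψ * pd2 v ρ θ ψ - pd2 u ρ θ ψ * pd1 v ρ θ ψ = ε * (cos θ)⁻¹ * pd3 w ρ θ ψ)
    (h₁₃ : pd1 u ρ θ ψ * pd3 v ρ θ ψ - pd3 u ρ θ ψ * pd1 v ρ θ ψ = -ε * cos θ * pd2 w ρ θ ψ)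
    (h₂₃ : pd2 u ρ θ ψ * pd3 v ρ θ ψ - pd3 u ρ θ ψ * pd2 v ρ θ ψ
      = ε * ρ ^ 2 * cos θ * pd1 w ρ θ ψ) :
    pairing u u ρ θ ψ * pairing v v ρ θ ψ - pairing u v ρ θ ψ ^ 2 = pairing w w ρ θ ψ := by
  have lagrange : pairing u u ρ θ ψ * pairing v v ρ θ ψ - pairing u v ρ θ ψ ^ 2
      = (ρ ^ 2)⁻¹ * (pd1 u ρ θ ψ * pd2 v ρ θ ψ - pd2 u ρ θ ψ * pd1 v ρ θ ψ) ^ 2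
        + (ρ ^ 2)⁻¹ * (cos θ ^ 2)⁻¹ * (pd1 u ρ θ ψ * pd3 v ρ θ ψ - pd3 u ρ θ ψ * pd1 v ρ θ ψ) ^ 2
        + (ρ ^ 2)⁻¹ ^ 2 * (cos θ ^ 2)⁻¹
          * (pd2 u ρ θ ψ * pd3 v ρ θ ψ - pd3 u ρ θ ψ * pd2 v ρ θ ψ) ^ 2 := by
    unfold pairing
    ring
  rw [lagrange, h₁₂, h₁₃, h₂₃, pairing]
  simp only [mul_pow, neg_sq, hε, one_mul]
  field_simp
  ring

section Ansatz

variable {C k l ρ θ ψ : ℝ}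

theorem pd1_ansatz (hρ : ρ ≠ 0) :
    pd1 (ansatz C k l) ρ θ ψ = k * ρ⁻¹ * ansatz C k l ρ θ ψ := by
  have h := ((((Real.hasDerivAt_rpow_const (p := k) (Or.inl hρ)).const_mul C).mul_const
    (cos θ ^ l)).mul_const (cos (2 * θ) ^ ((k - l) / 2))).mul_const (cos ψ ^ l)
  simp only [pd1, ansatz]
  rw [h.deriv, Real.rpow_sub_one hρ]
  ring

theorem pd2_ansatz (hc : cos θ ≠ 0) (hd : cos (2 * θ) ≠ 0) :
    pd2 (ansatz C k l) ρ θ ψ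
      = -(l * tan θ + (k - l) * tan (2 * θ)) * ansatz C k l ρ θ ψ := by
  have hcos : HasDerivAt (fun x => cos x ^ l) (-sin θ * l * cos θ ^ (l - 1)) θ :=
    (Real.hasDerivAt_cos θ).rpow_const (Or.inl hc)
  have hcos2 : HasDerivAt (fun x => cos (2 * x) ^ ((k - l) / 2))
      (-sin (2 * θ) * (2 * 1) * ((k - l) / 2) * cos (2 * θ) ^ ((k - l) / 2 - 1)) θ :=
    ((Real.hasDerivAt_cos (2 * θ)).comp θ ((hasDerivAt_id θ).const_mul 2)).rpow_const (Or.inl hd)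
  have h := ((hcos.const_mul (C * ρ ^ k)).mul hcos2).mul_const (cos ψ ^ l)
  simp only [Pi.mul_apply] at h
  simp only [pd2, ansatz]
  rw [h.deriv, Real.rpow_sub_one hc, Real.rpow_sub_one hd, tan_eq_sin_div_cos,
    tan_eq_sin_div_cos]
  ring

theorem pd3_ansatz (he : cos ψ ≠ 0) :
    pd3 (ansatz C k l) ρ θ ψ = -(l * tan ψ) * ansatz C k l ρ θ ψ := by
  have h := ((Real.hasDerivAt_cos ψ).rpow_const (p := l) (Or.inl he)).const_mul
    (C * ρ ^ k * cos θ ^ l * cos (2 * θ) ^ ((k - l) / 2))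
  simp only [pd3, ansatz]
  rw [h.deriv, Real.rpow_sub_one he, tan_eq_sin_div_cos]
  ring

theorem ansatz_mul_ansatz {C₁ k₁ l₁ C₂ k₂ l₂ : ℝ} (hρ : 0 < ρ) (hc : 0 < cos θ)
    (hd : 0 < cos (2 * θ)) (he : 0 < cos ψ) :
    ansatz C₁ k₁ l₁ ρ θ ψ * ansatz C₂ k₂ l₂ ρ θ ψ
      = ansatz (C₁ * C₂) (k₁ + k₂) (l₁ + l₂) ρ θ ψ := by
  rw [ansatz, ansatz, ansatz, Real.rpow_add hρ, Real.rpow_add hc, Real.rpow_add he,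
    show (k₁ + k₂ - (l₁ + l₂)) / 2 = (k₁ - l₁) / 2 + (k₂ - l₂) / 2 by ring, Real.rpow_add hd]
  ring

theorem ansatz_three_one : ansatz C 3 1 ρ θ ψ = C * ρ ^ 3 * cos θ * cos (2 * θ) * cos ψ := by
  norm_num [ansatz]

end Ansatz

theorem pd1_radial (ρ θ ψ : ℝ) : pd1 radial ρ θ ψ = 2 * ρ * sin θ * cos θ * sin ψ := by
  have h := (((hasDerivAt_pow 2 ρ).mul_const (sin θ)).mul_const (cos θ)).mul_const (sin ψ)
  simp only [pd1, radial]
  rw [h.deriv]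
  ring

theorem pd2_radial (ρ θ ψ : ℝ) : pd2 radial ρ θ ψ = ρ ^ 2 * cos (2 * θ) * sin ψ := by
  have h := (((Real.hasDerivAt_sin θ).const_mul (ρ ^ 2)).mul (Real.hasDerivAt_cos θ)).mul_const
    (sin ψ)
  simp only [Pi.mul_apply] at h
  simp only [pd2, radial]
  rw [h.deriv, Real.cos_two_mul']
  ring

theorem pd3_radial (ρ θ ψ : ℝ) : pd3 radial ρ θ ψ = ρ ^ 2 * sin θ * cos θ * cos ψ := by
  simp only [pd3, radial]
  rw [((Real.hasDerivAt_sin ψ).const_mul (ρ ^ 2 * sin θ * cos θ)).deriv]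

theorem cos_mul_cos_two_mul_mul_tan_two_mul_sub_tan {θ : ℝ} (hc : cos θ ≠ 0)
    (hd : cos (2 * θ) ≠ 0) : cos θ * cos (2 * θ) * (tan (2 * θ) - tan θ) = sin θ := by
  calc cos θ * cos (2 * θ) * (tan (2 * θ) - tan θ) = sin (2 * θ) * cos θ - cos (2 * θ) * sin θ := by
        rw [tan_eq_sin_div_cos, tan_eq_sin_div_cos]
        field_simp
    _ = sin θ := by rw [← sin_sub]; ring_nf

section Wedge

variable {C₁ k₁ l₁ C₂ k₂ l₂ ρ θ ψ : ℝ}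

theorem pd1_ansatz_mul_pd2_ansatz_sub (hρ : ρ ≠ 0) (hc : cos θ ≠ 0) (hd : cos (2 * θ) ≠ 0) :
    pd1 (ansatz C₁ k₁ l₁) ρ θ ψ * pd2 (ansatz C₂ k₂ l₂) ρ θ ψ
        - pd2 (ansatz C₁ k₁ l₁) ρ θ ψ * pd1 (ansatz C₂ k₂ l₂) ρ θ ψ
      = (k₁ * l₂ - k₂ * l₁) * (ansatz C₁ k₁ l₁ ρ θ ψ * ansatz C₂ k₂ l₂ ρ θ ψ)
        * ρ⁻¹ * (tan (2 * θ) - tan θ) := by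
  rw [pd1_ansatz hρ, pd1_ansatz hρ, pd2_ansatz hc hd, pd2_ansatz hc hd]
  ring

theorem pd1_ansatz_mul_pd3_ansatz_sub (hρ : ρ ≠ 0) (he : cos ψ ≠ 0) :
    pd1 (ansatz C₁ k₁ l₁) ρ θ ψ * pd3 (ansatz C₂ k₂ l₂) ρ θ ψ
        - pd3 (ansatz C₁ k₁ l₁) ρ θ ψ * pd1 (ansatz C₂ k₂ l₂) ρ θ ψ
      = -((k₁ * l₂ - k₂ * l₁) * (ansatz C₁ k₁ l₁ ρ θ ψ * ansatz C₂ k₂ l₂ ρ θ ψ)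
        * ρ⁻¹ * tan ψ) := by
  rw [pd1_ansatz hρ, pd1_ansatz hρ, pd3_ansatz he, pd3_ansatz he]
  ring

theorem pd2_ansatz_mul_pd3_ansatz_sub (hc : cos θ ≠ 0) (hd : cos (2 * θ) ≠ 0)
    (he : cos ψ ≠ 0) :
    pd2 (ansatz C₁ k₁ l₁) ρ θ ψ * pd3 (ansatz C₂ k₂ l₂) ρ θ ψ
        - pd3 (ansatz C₁ k₁ l₁) ρ θ ψ * pd2 (ansatz C₂ k₂ l₂) ρ θ ψ
      = (k₁ * l₂ - k₂ * l₁) * (ansatz C₁ k₁ l₁ ρ θ ψ * ansatz C₂ k₂ l₂ ρ θ ψ)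
        * tan (2 * θ) * tan ψ := by
  rw [pd2_ansatz hc hd, pd2_ansatz hc hd, pd3_ansatz he, pd3_ansatz he]
  ring

end Wedge

/-- The ansatz coordinates `z^α = C_α ρ^{k_α}(cos θ)^{l_α}(cos 2θ)^{(k_α−l_α)/2}(cos ψ)^{l_α}`
give `λ = 1` (the Gram determinant identity) provided `k₁ + k₂ = 3`, `l₁ + l₂ = 1` and
`C₁C₂ = ±1/(k₁l₂ − k₂l₁)`, where `r = ρ² sin θ cos θ sin ψ`. -/
theorem stmt_5 (k₁ l₁ C₁ k₂ l₂ C₂ ε : ℝ)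
    (hk : k₁ + k₂ = 3) (hl : l₁ + l₂ = 1) (hkl : k₁ * l₂ - k₂ * l₁ ≠ 0)
    (hε : ε = 1 ∨ ε = -1) (hC : C₁ * C₂ = ε / (k₁ * l₂ - k₂ * l₁))
    (ρ θ ψ : ℝ) (hρ : 0 < ρ) (hθ0 : 0 < θ) (hθ1 : θ < π / 4)
    (hψ0 : 0 < ψ) (hψ1 : ψ < π / 2) :
    pairing
        (fun ρ θ ψ => C₁ * ρ ^ k₁ * (cos θ) ^ l₁ * (cos (2 * θ)) ^ ((k₁ - l₁) / 2) * (cos ψ) ^ l₁)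
        (fun ρ θ ψ => C₁ * ρ ^ k₁ * (cos θ) ^ l₁ * (cos (2 * θ)) ^ ((k₁ - l₁) / 2) * (cos ψ) ^ l₁)
        ρ θ ψ *
      pairing
        (fun ρ θ ψ => C₂ * ρ ^ k₂ * (cos θ) ^ l₂ * (cos (2 * θ)) ^ ((k₂ - l₂) / 2) * (cos ψ) ^ l₂)
        (fun ρ θ ψ => C₂ * ρ ^ k₂ * (cos θ) ^ l₂ * (cos (2 * θ)) ^ ((k₂ - l₂) / 2) * (cos ψ) ^ l₂)
        ρ θ ψ -
      (pairing
        (fun ρ θ ψ => C₁ * ρ ^ k₁ * (cos θ) ^ l₁ * (cos (2 * θ)) ^ ((k₁ - l₁) / 2) * (cos ψ) ^ l₁)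
        (fun ρ θ ψ => C₂ * ρ ^ k₂ * (cos θ) ^ l₂ * (cos (2 * θ)) ^ ((k₂ - l₂) / 2) * (cos ψ) ^ l₂)
        ρ θ ψ) ^ 2
      = pairing (fun ρ θ ψ => ρ ^ 2 * sin θ * cos θ * sin ψ)
          (fun ρ θ ψ => ρ ^ 2 * sin θ * cos θ * sin ψ) ρ θ ψ := by
  have hc : 0 < cos θ := cos_pos_of_mem_Ioo ⟨by linarith [pi_pos], by linarith⟩
  have hd : 0 < cos (2 * θ) := cos_pos_of_mem_Ioo ⟨by linarith [pi_pos], by linarith⟩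
  have he : 0 < cos ψ := cos_pos_of_mem_Ioo ⟨by linarith [pi_pos], by linarith⟩
  have hZ : (k₁ * l₂ - k₂ * l₁) * (ansatz C₁ k₁ l₁ ρ θ ψ * ansatz C₂ k₂ l₂ ρ θ ψ)
      = ε * (ρ ^ 3 * cos θ * cos (2 * θ) * cos ψ) := by
    rw [ansatz_mul_ansatz hρ hc hd he, hk, hl, ansatz_three_one, hC]
    field_simp
  have hsin := cos_mul_cos_two_mul_mul_tan_two_mul_sub_tan hc.ne' hd.ne'
  have hε2 : ε ^ 2 = 1 := by rcases hε with rfl | rfl <;> norm_num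
  refine pairing_gram_eq_pairing_of_wedge (u := ansatz C₁ k₁ l₁) (v := ansatz C₂ k₂ l₂)
    (w := radial) hρ.ne' hc.ne' hε2 ?_ ?_ ?_
  · rw [pd1_ansatz_mul_pd2_ansatz_sub hρ.ne' hc.ne' hd.ne', hZ, pd3_radial, ← hsin]
    field_simp
  · rw [pd1_ansatz_mul_pd3_ansatz_sub hρ.ne' he.ne', hZ, pd2_radial, tan_eq_sin_div_cos]
    field_simp
  · rw [pd2_ansatz_mul_pd3_ansatz_sub hc.ne' hd.ne' he.ne', hZ, pd1_radial, tan_eq_sin_div_cos,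
      tan_eq_sin_div_cos, sin_two_mul]
    field_simp
end

section
/- Define on the region U = {(ρ,θ,ψ) : ρ > 0, 0 < θ < π/2, 0 < ψ < π/2} the functions r = ρ³ sin θ cos²θ sin ψ cos ψ, z¹ = ½ ρ² cos²θ (cos²ψ − sin²ψ), and z² = ¼ ρ² (3cos²θ − 2). With the pairing ⟨∇u, ∇v⟩ = (∂_ρ u)(∂_ρ v) + ρ⁻²(∂_θ u)(∂_θ v) + ρ⁻² cos⁻²θ (∂_ψ u)(∂_ψ v), one has for all (ρ,θ,ψ) ∈ U the Gram determinant identity ⟨∇z¹,∇z¹⟩·⟨∇z²,∇z²⟩ − ⟨∇z¹,∇z²⟩² = ⟨∇r,∇r⟩. -/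
/-!
Every pairing collapses to a short closed form once `sin² + cos² = 1` is used in `θ` and in `ψ`
(for instance `⟨∇z¹,∇z¹⟩ = ρ² cos²θ`). With `(cos²ψ − sin²ψ)² = 1 − 4 sin²ψ cos²ψ` the Gram
determinant becomes `ρ⁴ cos²θ (sin²θ + cos²θ sin²ψ cos²ψ)`, which is `⟨∇r,∇r⟩`.
-/

open Real

namespace CanonicalCoords

noncomputable def r (ρ θ ψ : ℝ) : ℝ := ρ ^ 3 * sin θ * (cos θ) ^ 2 * sin ψ * cos ψ

noncomputable def z₁ (ρ θ ψ : ℝ) : ℝ := (1 / 2) * ρ ^ 2 * (cos θ) ^ 2 * ((cos ψ) ^ 2 - (sin ψ) ^ 2)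

noncomputable def z₂ (ρ θ _ : ℝ) : ℝ := (1 / 4) * ρ ^ 2 * (3 * (cos θ) ^ 2 - 2)

variable (ρ θ ψ : ℝ)

theorem pd1_r : pd1 r ρ θ ψ = 3 * ρ ^ 2 * sin θ * cos θ ^ 2 * sin ψ * cos ψ :=
  (((((hasDerivAt_pow 3 ρ).mul_const (sin θ)).mul_const _).mul_const _).mul_const _).deriv.trans
    (by ring)

theorem pd2_r : pd2 r ρ θ ψ = ρ ^ 3 * (cos θ ^ 3 - 2 * sin θ ^ 2 * cos θ) * sin ψ * cos ψ :=
  (((((hasDerivAt_sin θ).const_mul (ρ ^ 3)).mul ((hasDerivAt_cos θ).fun_pow 2)).mul_const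
    (sin ψ)).mul_const (cos ψ)).deriv.trans (by ring)

theorem pd3_r : pd3 r ρ θ ψ = ρ ^ 3 * sin θ * cos θ ^ 2 * (cos ψ ^ 2 - sin ψ ^ 2) :=
  (((hasDerivAt_sin ψ).const_mul (ρ ^ 3 * sin θ * cos θ ^ 2)).mul (hasDerivAt_cos ψ)).deriv.trans
    (by ring)

theorem pd1_z₁ : pd1 z₁ ρ θ ψ = ρ * cos θ ^ 2 * (cos ψ ^ 2 - sin ψ ^ 2) :=
  ((((hasDerivAt_pow 2 ρ).const_mul (1 / 2)).mul_const _).mul_const _).deriv.trans (by ring)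

theorem pd2_z₁ : pd2 z₁ ρ θ ψ = -(ρ ^ 2 * sin θ * cos θ * (cos ψ ^ 2 - sin ψ ^ 2)) :=
  ((((hasDerivAt_cos θ).fun_pow 2).const_mul (1 / 2 * ρ ^ 2)).mul_const _).deriv.trans (by ring)

theorem pd3_z₁ : pd3 z₁ ρ θ ψ = -(2 * ρ ^ 2 * cos θ ^ 2 * sin ψ * cos ψ) :=
  ((((hasDerivAt_cos ψ).fun_pow 2).sub ((hasDerivAt_sin ψ).fun_pow 2)).const_mul
    (1 / 2 * ρ ^ 2 * cos θ ^ 2)).deriv.trans (by ring)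

theorem pd1_z₂ : pd1 z₂ ρ θ ψ = 1 / 2 * ρ * (3 * cos θ ^ 2 - 2) :=
  (((hasDerivAt_pow 2 ρ).const_mul (1 / 4)).mul_const _).deriv.trans (by ring)

theorem pd2_z₂ : pd2 z₂ ρ θ ψ = -(3 / 2 * ρ ^ 2 * sin θ * cos θ) :=
  (((((hasDerivAt_cos θ).fun_pow 2).const_mul 3).sub_const 2).const_mul
    (1 / 4 * ρ ^ 2)).deriv.trans (by ring)

theorem pd3_z₂ : pd3 z₂ ρ θ ψ = 0 :=
  deriv_const ψ _

variable {ρ θ}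

theorem pairing_z₁_self (hρ : ρ ≠ 0) (hθ : cos θ ≠ 0) :
    pairing z₁ z₁ ρ θ ψ = ρ ^ 2 * cos θ ^ 2 := by
  rw [pairing, pd1_z₁, pd2_z₁, pd3_z₁]
  field_simp
  linear_combination (cos ψ ^ 2 - sin ψ ^ 2) ^ 2 * sin_sq_add_cos_sq θ
    + (cos ψ ^ 2 + sin ψ ^ 2 + 1) * sin_sq_add_cos_sq ψ

theorem pairing_z₂_self (hρ : ρ ≠ 0) :
    pairing z₂ z₂ ρ θ ψ = 1 / 4 * ρ ^ 2 * (4 - 3 * cos θ ^ 2) := by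
  rw [pairing, pd1_z₂, pd2_z₂, pd3_z₂, mul_zero, mul_zero, add_zero]
  field_simp
  linear_combination 36 * cos θ ^ 2 * sin_sq_add_cos_sq θ

theorem pairing_z₁_z₂ (hρ : ρ ≠ 0) :
    pairing z₁ z₂ ρ θ ψ = 1 / 2 * ρ ^ 2 * cos θ ^ 2 * (cos ψ ^ 2 - sin ψ ^ 2) := by
  rw [pairing, pd1_z₁, pd2_z₁, pd1_z₂, pd2_z₂, pd3_z₂, mul_zero, mul_zero, add_zero]
  field_simp
  linear_combination 3 * cos θ ^ 2 * (cos ψ ^ 2 - sin ψ ^ 2) * sin_sq_add_cos_sq θ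

theorem pairing_r_self (hρ : ρ ≠ 0) (hθ : cos θ ≠ 0) :
    pairing r r ρ θ ψ = ρ ^ 4 * cos θ ^ 2 * (sin θ ^ 2 + cos θ ^ 2 * sin ψ ^ 2 * cos ψ ^ 2) := by
  rw [pairing, pd1_r, pd2_r, pd3_r]
  field_simp
  linear_combination sin ψ ^ 2 * cos ψ ^ 2 * (cos θ ^ 2 + 4 * sin θ ^ 2) * sin_sq_add_cos_sq θ
    + sin θ ^ 2 * (sin ψ ^ 2 + cos ψ ^ 2 + 1) * sin_sq_add_cos_sq ψ

theorem gram_z₁_z₂_eq_pairing_r (hρ : ρ ≠ 0) (hθ : cos θ ≠ 0) :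
    pairing z₁ z₁ ρ θ ψ * pairing z₂ z₂ ρ θ ψ - pairing z₁ z₂ ρ θ ψ ^ 2 = pairing r r ρ θ ψ := by
  rw [pairing_z₁_self ψ hρ hθ, pairing_z₂_self ψ hρ, pairing_z₁_z₂ ψ hρ, pairing_r_self ψ hρ hθ]
  linear_combination -ρ ^ 4 * cos θ ^ 2 * sin_sq_add_cos_sq θ
    - 1 / 4 * ρ ^ 4 * cos θ ^ 4 * (sin ψ ^ 2 + cos ψ ^ 2 + 1) * sin_sq_add_cos_sq ψ

end CanonicalCoords

theorem stmt_14_general (ρ θ ψ : ℝ) (hρ : 0 < ρ) (hθ0 : 0 < θ) (hθ1 : θ < π / 2) :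
    pairing (fun ρ θ ψ => (1 / 2) * ρ ^ 2 * (cos θ) ^ 2 * ((cos ψ) ^ 2 - (sin ψ) ^ 2))
        (fun ρ θ ψ => (1 / 2) * ρ ^ 2 * (cos θ) ^ 2 * ((cos ψ) ^ 2 - (sin ψ) ^ 2)) ρ θ ψ *
      pairing (fun ρ θ _ => (1 / 4) * ρ ^ 2 * (3 * (cos θ) ^ 2 - 2))
        (fun ρ θ _ => (1 / 4) * ρ ^ 2 * (3 * (cos θ) ^ 2 - 2)) ρ θ ψ -
      (pairing (fun ρ θ ψ => (1 / 2) * ρ ^ 2 * (cos θ) ^ 2 * ((cos ψ) ^ 2 - (sin ψ) ^ 2))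
        (fun ρ θ _ => (1 / 4) * ρ ^ 2 * (3 * (cos θ) ^ 2 - 2)) ρ θ ψ) ^ 2
      = pairing (fun ρ θ ψ => ρ ^ 3 * sin θ * (cos θ) ^ 2 * sin ψ * cos ψ)
          (fun ρ θ ψ => ρ ^ 3 * sin θ * (cos θ) ^ 2 * sin ψ * cos ψ) ρ θ ψ :=
  CanonicalCoords.gram_z₁_z₂_eq_pairing_r ψ hρ.ne'
    (cos_pos_of_mem_Ioo ⟨by linarith [pi_pos], hθ1⟩).ne'

/-- The Gram determinant identity (`λ = 1`) for the canonical coordinates of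
seven-dimensional Minkowski space. -/
theorem stmt_14 (ρ θ ψ : ℝ) (hρ : 0 < ρ) (hθ0 : 0 < θ) (hθ1 : θ < π / 2)
    (hψ0 : 0 < ψ) (hψ1 : ψ < π / 2) :
    pairing (fun ρ θ ψ => (1 / 2) * ρ ^ 2 * (cos θ) ^ 2 * ((cos ψ) ^ 2 - (sin ψ) ^ 2))
        (fun ρ θ ψ => (1 / 2) * ρ ^ 2 * (cos θ) ^ 2 * ((cos ψ) ^ 2 - (sin ψ) ^ 2)) ρ θ ψ *
      pairing (fun ρ θ _ => (1 / 4) * ρ ^ 2 * (3 * (cos θ) ^ 2 - 2))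
        (fun ρ θ _ => (1 / 4) * ρ ^ 2 * (3 * (cos θ) ^ 2 - 2)) ρ θ ψ -
      (pairing (fun ρ θ ψ => (1 / 2) * ρ ^ 2 * (cos θ) ^ 2 * ((cos ψ) ^ 2 - (sin ψ) ^ 2))
        (fun ρ θ _ => (1 / 4) * ρ ^ 2 * (3 * (cos θ) ^ 2 - 2)) ρ θ ψ) ^ 2
      = pairing (fun ρ θ ψ => ρ ^ 3 * sin θ * (cos θ) ^ 2 * sin ψ * cos ψ)
          (fun ρ θ ψ => ρ ^ 3 * sin θ * (cos θ) ^ 2 * sin ψ * cos ψ) ρ θ ψ :=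
  stmt_14_general ρ θ ψ hρ hθ0 hθ1
end

section
/- Let ρ₀ > 0, f(ρ) = 1 − ρ₀⁴/ρ⁴, and define on V = {(ρ,θ,ψ) : ρ > ρ₀, 0 < θ < π/2, 0 < ψ < π/2} the functions r = ρ³ √(f(ρ)) sin θ cos²θ sin ψ cos ψ, z¹ = ½ √(ρ⁴ − ρ₀⁴/3) cos²θ (cos²ψ − sin²ψ), and z² = ¼ √(ρ⁴ − ρ₀⁴/3) (3cos²θ − 2). Then for α = 1, 2 and all (ρ,θ,ψ) ∈ V one has ⟨∇r, ∇z^α⟩ = 0, where ⟨∇u,∇v⟩ = f(ρ)(∂_ρ u)(∂_ρ v) + ρ⁻²(∂_θ u)(∂_θ v) + ρ⁻² cos⁻²θ (∂_ψ u)(∂_ψ v). Moreover the common radial profile b(ρ) = √(ρ⁴ − ρ₀⁴/3) satisfies b′(ρ)/b(ρ) = 6ρ³/(3ρ⁴ − ρ₀⁴). -/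
open Real

/-- Inner product of gradients with respect to the orbit-space metric
`g̃ = f⁻¹ dρ² + ρ² dθ² + ρ² cos²θ dψ²`. -/
noncomputable def pairingF (f : ℝ → ℝ) (u v : ℝ → ℝ → ℝ → ℝ) (ρ θ ψ : ℝ) : ℝ :=
  f ρ * (pd1 u ρ θ ψ * pd1 v ρ θ ψ)
    + (ρ ^ 2)⁻¹ * (pd2 u ρ θ ψ * pd2 v ρ θ ψ)
    + (ρ ^ 2)⁻¹ * ((cos θ) ^ 2)⁻¹ * (pd3 u ρ θ ψ * pd3 v ρ θ ψ)

/-!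
All of `r`, `z¹`, `z²` are products `R(ρ) A(θ) P(ψ)`, so the pairing separates. The azimuthal
factors give `(sin ψ cos ψ)′ (cos²ψ − sin²ψ)′ = −4 sin ψ cos ψ (cos²ψ − sin²ψ)` for `z¹` (and `0`
for `z²`); with that constant the polar factors of both `z^α` have separation constant `−6`, and
what is left is the radial identity `f R′ b′ = 6 R b / ρ²` for `R = ρ³√f = ρ √(ρ⁴ − ρ₀⁴)`. Since
`R′ = (3ρ⁴ − ρ₀⁴)/√(ρ⁴ − ρ₀⁴)`, this is exactly `b′/b = 6ρ³/(3ρ⁴ − ρ₀⁴)`.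
-/

section Separable

variable {f R A P S B Q : ℝ → ℝ} {u v : ℝ → ℝ → ℝ → ℝ}

theorem pairingF_separable (ρ θ ψ : ℝ) :
    pairingF f (fun ρ θ ψ => R ρ * A θ * P ψ) (fun ρ θ ψ => S ρ * B θ * Q ψ) ρ θ ψ =
      f ρ * (deriv R ρ * deriv S ρ) * (A θ * B θ) * (P ψ * Q ψ)
        + (ρ ^ 2)⁻¹ * (R ρ * S ρ) * (deriv A θ * deriv B θ) * (P ψ * Q ψ)
        + (ρ ^ 2)⁻¹ * (cos θ ^ 2)⁻¹ * (R ρ * S ρ) * (A θ * B θ) * (deriv P ψ * deriv Q ψ) := by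
  simp only [pairingF, pd1, pd2, pd3, deriv_mul_const_field, deriv_const_mul_field]
  ring

/-- Separation of variables: `κ` and `μ` are the polar and azimuthal separation constants. -/
theorem pairingF_eq_zero_of_separable {κ μ ρ θ ψ : ℝ}
    (hu : ∀ ρ θ ψ, u ρ θ ψ = R ρ * A θ * P ψ) (hv : ∀ ρ θ ψ, v ρ θ ψ = S ρ * B θ * Q ψ)
    (hR : f ρ * deriv R ρ * deriv S ρ = κ * R ρ * S ρ / ρ ^ 2)
    (hA : deriv A θ * deriv B θ + μ * A θ * B θ / cos θ ^ 2 = -κ * A θ * B θ)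
    (hP : deriv P ψ * deriv Q ψ = μ * P ψ * Q ψ) :
    pairingF f u v ρ θ ψ = 0 := by
  obtain rfl : u = fun ρ θ ψ => R ρ * A θ * P ψ := funext₃ hu
  obtain rfl : v = fun ρ θ ψ => S ρ * B θ * Q ψ := funext₃ hv
  rw [pairingF_separable]
  linear_combination (A θ * B θ * (P ψ * Q ψ)) * hR + ((ρ ^ 2)⁻¹ * (R ρ * S ρ) * (P ψ * Q ψ)) * hA
    + ((ρ ^ 2)⁻¹ * (cos θ ^ 2)⁻¹ * (R ρ * S ρ) * (A θ * B θ)) * hP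

end Separable

section Angular

variable (θ : ℝ)

theorem deriv_sin_mul_cos_sq :
    deriv (fun θ => sin θ * cos θ ^ 2) θ = cos θ ^ 3 - 2 * sin θ ^ 2 * cos θ := by
  rw [((hasDerivAt_sin θ).fun_mul ((hasDerivAt_cos θ).fun_pow 2)).deriv]; ring

theorem deriv_cos_sq : deriv (fun θ => cos θ ^ 2) θ = -2 * sin θ * cos θ := by
  rw [((hasDerivAt_cos θ).fun_pow 2).deriv]; ring

theorem deriv_sin_mul_cos : deriv (fun θ => sin θ * cos θ) θ = cos θ ^ 2 - sin θ ^ 2 := by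
  rw [((hasDerivAt_sin θ).fun_mul (hasDerivAt_cos θ)).deriv]; ring

theorem deriv_cos_sq_sub_sin_sq :
    deriv (fun θ => cos θ ^ 2 - sin θ ^ 2) θ = -4 * sin θ * cos θ := by
  rw [(((hasDerivAt_cos θ).fun_pow 2).fun_sub ((hasDerivAt_sin θ).fun_pow 2)).deriv]; ring

end Angular

section SchwarzschildTangherlini

variable {ρ₀ ρ θ : ℝ}

noncomputable def canonicalRadial (ρ₀ ρ : ℝ) : ℝ := ρ ^ 3 * √(1 - ρ₀ ^ 4 / ρ ^ 4)

noncomputable def radialProfile (ρ₀ ρ : ℝ) : ℝ := √(ρ ^ 4 - ρ₀ ^ 4 / 3)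

noncomputable def canonicalR (ρ₀ ρ θ ψ : ℝ) : ℝ :=
  ρ ^ 3 * √(1 - ρ₀ ^ 4 / ρ ^ 4) * sin θ * cos θ ^ 2 * sin ψ * cos ψ

noncomputable def canonicalZ₁ (ρ₀ ρ θ ψ : ℝ) : ℝ :=
  1 / 2 * √(ρ ^ 4 - ρ₀ ^ 4 / 3) * cos θ ^ 2 * (cos ψ ^ 2 - sin ψ ^ 2)

noncomputable def canonicalZ₂ (ρ₀ ρ θ _ψ : ℝ) : ℝ :=
  1 / 4 * √(ρ ^ 4 - ρ₀ ^ 4 / 3) * (3 * cos θ ^ 2 - 2)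

theorem hasDerivAt_radialProfile (h : ρ₀ ^ 4 / 3 < ρ ^ 4) :
    HasDerivAt (radialProfile ρ₀) (2 * ρ ^ 3 / radialProfile ρ₀ ρ) ρ := by
  refine (((hasDerivAt_pow 4 ρ).sub_const (ρ₀ ^ 4 / 3)).sqrt (sub_pos.2 h).ne').congr_deriv ?_
  rw [radialProfile]
  norm_num
  ring

theorem radialProfile_logDeriv (h : ρ₀ ^ 4 / 3 < ρ ^ 4) :
    deriv (radialProfile ρ₀) ρ / radialProfile ρ₀ ρ = 6 * ρ ^ 3 / (3 * ρ ^ 4 - ρ₀ ^ 4) := by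
  have hb : radialProfile ρ₀ ρ ^ 2 = ρ ^ 4 - ρ₀ ^ 4 / 3 := sq_sqrt (sub_pos.2 h).le
  rw [(hasDerivAt_radialProfile h).deriv, div_div, ← sq, hb]
  field_simp
  ring

theorem hasDerivAt_canonicalRadial (h : ρ₀ ^ 4 < ρ ^ 4) :
    HasDerivAt (canonicalRadial ρ₀)
      ((3 * ρ ^ 4 - ρ₀ ^ 4) / (ρ ^ 2 * √(1 - ρ₀ ^ 4 / ρ ^ 4))) ρ := by
  have hρ4 : 0 < ρ ^ 4 := (by positivity : (0 : ℝ) ≤ ρ₀ ^ 4).trans_lt h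
  have hρ : ρ ≠ 0 := by rintro rfl; norm_num at hρ4
  have hf : 0 < 1 - ρ₀ ^ 4 / ρ ^ 4 := sub_pos.2 ((div_lt_one hρ4).2 h)
  have hg : HasDerivAt (fun x => 1 - ρ₀ ^ 4 / x ^ 4) (4 * ρ₀ ^ 4 / ρ ^ 5) ρ := by
    refine (((hasDerivAt_const ρ (ρ₀ ^ 4)).fun_div (hasDerivAt_pow 4 ρ)
      (pow_ne_zero 4 hρ)).const_sub 1).congr_deriv ?_
    field_simp
    ring
  refine ((hasDerivAt_pow 3 ρ).mul (hg.sqrt hf.ne')).congr_deriv ?_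
  have hsf : √(1 - ρ₀ ^ 4 / ρ ^ 4) ^ 2 = 1 - ρ₀ ^ 4 / ρ ^ 4 := sq_sqrt hf.le
  have hsf₀ : √(1 - ρ₀ ^ 4 / ρ ^ 4) ≠ 0 := (sqrt_pos.2 hf).ne'
  generalize √(1 - ρ₀ ^ 4 / ρ ^ 4) = sf at hsf hsf₀ ⊢
  norm_num
  field_simp
  rw [hsf]
  field_simp
  ring

theorem mul_deriv_canonicalRadial_mul_deriv_radialProfile (h : ρ₀ ^ 4 < ρ ^ 4) :
    (1 - ρ₀ ^ 4 / ρ ^ 4) * deriv (canonicalRadial ρ₀) ρ * deriv (radialProfile ρ₀) ρ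
      = 6 * canonicalRadial ρ₀ ρ * radialProfile ρ₀ ρ / ρ ^ 2 := by
  have hρ₀ : 0 ≤ ρ₀ ^ 4 := by positivity
  have h' : ρ₀ ^ 4 / 3 < ρ ^ 4 := by linarith
  have hf : 0 < 1 - ρ₀ ^ 4 / ρ ^ 4 := sub_pos.2 ((div_lt_one (hρ₀.trans_lt h)).2 h)
  have hsf : √(1 - ρ₀ ^ 4 / ρ ^ 4) ^ 2 = 1 - ρ₀ ^ 4 / ρ ^ 4 := sq_sqrt hf.le
  have hsf₀ : √(1 - ρ₀ ^ 4 / ρ ^ 4) ≠ 0 := (sqrt_pos.2 hf).ne'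
  have hb : radialProfile ρ₀ ρ ^ 2 = ρ ^ 4 - ρ₀ ^ 4 / 3 := sq_sqrt (sub_pos.2 h').le
  have hb₀ : radialProfile ρ₀ ρ ≠ 0 := (sqrt_pos.2 (sub_pos.2 h')).ne'
  rw [(hasDerivAt_canonicalRadial h).deriv, (hasDerivAt_radialProfile h').deriv, canonicalRadial]
  generalize √(1 - ρ₀ ^ 4 / ρ ^ 4) = sf at hsf hsf₀ ⊢
  rw [← hsf]
  generalize radialProfile ρ₀ ρ = b at hb hb₀ ⊢
  field_simp
  linear_combination (-6 * ρ) * hb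

theorem pairingF_canonicalR_canonicalZ₁ (h : ρ₀ ^ 4 < ρ ^ 4) (hθ : cos θ ≠ 0) (ψ : ℝ) :
    pairingF (fun ρ => 1 - ρ₀ ^ 4 / ρ ^ 4) (canonicalR ρ₀) (canonicalZ₁ ρ₀) ρ θ ψ = 0 :=
  pairingF_eq_zero_of_separable (κ := 6) (μ := -4)
    (R := canonicalRadial ρ₀) (A := fun θ => sin θ * cos θ ^ 2) (P := fun ψ => sin ψ * cos ψ)
    (S := radialProfile ρ₀) (B := fun θ => cos θ ^ 2 / 2) (Q := fun ψ => cos ψ ^ 2 - sin ψ ^ 2)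
    (fun _ _ _ => by rw [canonicalR, canonicalRadial]; ring)
    (fun _ _ _ => by rw [canonicalZ₁, radialProfile]; ring)
    (mul_deriv_canonicalRadial_mul_deriv_radialProfile h)
    (by
      rw [deriv_sin_mul_cos_sq, deriv_div_const, deriv_cos_sq]
      field_simp
      linear_combination 4 * sin θ * sin_sq_add_cos_sq θ)
    (by rw [deriv_sin_mul_cos, deriv_cos_sq_sub_sin_sq]; ring)

theorem pairingF_canonicalR_canonicalZ₂ (h : ρ₀ ^ 4 < ρ ^ 4) (ψ : ℝ) :
    pairingF (fun ρ => 1 - ρ₀ ^ 4 / ρ ^ 4) (canonicalR ρ₀) (canonicalZ₂ ρ₀) ρ θ ψ = 0 :=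
  pairingF_eq_zero_of_separable (κ := 6) (μ := 0)
    (R := canonicalRadial ρ₀) (A := fun θ => sin θ * cos θ ^ 2) (P := fun ψ => sin ψ * cos ψ)
    (S := radialProfile ρ₀) (B := fun θ => (3 * cos θ ^ 2 - 2) / 4) (Q := fun _ => 1)
    (fun _ _ _ => by rw [canonicalR, canonicalRadial]; ring)
    (fun _ _ _ => by rw [canonicalZ₂, radialProfile]; ring)
    (mul_deriv_canonicalRadial_mul_deriv_radialProfile h)
    (by
      rw [deriv_sin_mul_cos_sq, deriv_div_const, deriv_sub_const, deriv_const_mul_field,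
        deriv_cos_sq]
      linear_combination 3 * cos θ ^ 2 * sin θ * sin_sq_add_cos_sq θ)
    (by rw [deriv_const]; ring)

end SchwarzschildTangherlini

/-- Orthogonality `⟨∇r, ∇z^α⟩ = 0`, `α = 1,2`, for the canonical coordinates of the
seven-dimensional Schwarzschild–Tangherlini black hole, and the logarithmic derivative
identity `b′/b = 6ρ³/(3ρ⁴ − ρ₀⁴)` for the common radial profile `b(ρ) = √(ρ⁴ − ρ₀⁴/3)`. -/
theorem stmt_16 (ρ₀ : ℝ) (hρ₀ : 0 < ρ₀) :
    (∀ ρ θ ψ : ℝ, ρ₀ < ρ → 0 < θ → θ < π / 2 → 0 < ψ → ψ < π / 2 →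
      pairingF (fun ρ => 1 - ρ₀ ^ 4 / ρ ^ 4)
          (fun ρ θ ψ =>
            ρ ^ 3 * Real.sqrt (1 - ρ₀ ^ 4 / ρ ^ 4) * sin θ * (cos θ) ^ 2 * sin ψ * cos ψ)
          (fun ρ θ ψ =>
            (1 / 2) * Real.sqrt (ρ ^ 4 - ρ₀ ^ 4 / 3) * (cos θ) ^ 2 *
              ((cos ψ) ^ 2 - (sin ψ) ^ 2)) ρ θ ψ = 0 ∧
      pairingF (fun ρ => 1 - ρ₀ ^ 4 / ρ ^ 4)
          (fun ρ θ ψ =>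
            ρ ^ 3 * Real.sqrt (1 - ρ₀ ^ 4 / ρ ^ 4) * sin θ * (cos θ) ^ 2 * sin ψ * cos ψ)
          (fun ρ θ _ =>
            (1 / 4) * Real.sqrt (ρ ^ 4 - ρ₀ ^ 4 / 3) * (3 * (cos θ) ^ 2 - 2)) ρ θ ψ = 0) ∧
    (∀ ρ : ℝ, ρ₀ < ρ →
      deriv (fun ρ => Real.sqrt (ρ ^ 4 - ρ₀ ^ 4 / 3)) ρ / Real.sqrt (ρ ^ 4 - ρ₀ ^ 4 / 3)
        = 6 * ρ ^ 3 / (3 * ρ ^ 4 - ρ₀ ^ 4)) := by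
  have hpow : ∀ ρ, ρ₀ < ρ → ρ₀ ^ 4 < ρ ^ 4 := fun ρ hρ => pow_lt_pow_left₀ hρ hρ₀.le four_ne_zero
  refine ⟨fun ρ θ ψ hρ hθ₀ hθ _ _ => ⟨?_, pairingF_canonicalR_canonicalZ₂ (hpow ρ hρ) ψ⟩,
    fun ρ hρ => radialProfile_logDeriv ?_⟩
  · have hcos : cos θ ≠ 0 := (cos_pos_of_mem_Ioo ⟨by linarith [pi_pos], hθ⟩).ne'
    exact pairingF_canonicalR_canonicalZ₁ (hpow ρ hρ) hcos ψ
  · have : 0 ≤ ρ₀ ^ 4 := by positivity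
    linarith [hpow ρ hρ]
end
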